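/- arXiv:2008.10898 — 7 statements merged into one kernel-verified Lean document; each statement's English description precedes it below -/
import Mathlib

section
/- Let f : ℝ^d → ℝ be differentiable and L-smooth with L > 0, and suppose f satisfies the Polyak–Łojasiewicz condition with parameter μ > 0 and value f*, i.e. ‖∇f(x)‖² ≥ 2μ(f(x) − f*) for all x ∈ ℝ^d. Let η > 0 and x, g ∈ ℝ^d, and set x' := x − η g. Then f(x') − f* ≤ (1 − μη)(f(x) − f*) − (1/(2η) − L/2)‖x' − x‖² + (η/2)‖g − ∇f(x)‖². -/
/-!
The descent lemma `f y ≤ f x + ⟪∇f x, y - x⟫ + (L/2)‖y - x‖²` applied to the step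
`x' - x = -η g` bounds `f x'` by `f x - η⟪g, ∇f x⟫ + (L/2)‖x' - x‖²`. Expanding
`‖g - ∇f x‖² = ‖g‖² - 2⟪g, ∇f x⟫ + ‖∇f x‖²` and using `η‖g‖² = ‖x' - x‖² / η`, what remains
is the PL inequality at `x` multiplied by `η / 2`.
-/

open scoped RealInnerProductSpace

section Descent

variable {E : Type*} [NormedAddCommGroup E] [InnerProductSpace ℝ E] [CompleteSpace E]
  {f : E → ℝ} {L : ℝ}

theorem hasDerivAt_comp_add_smul_of_differentiable (hf : Differentiable ℝ f) (x v : E) (t : ℝ) :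
    HasDerivAt (fun s : ℝ => f (x + s • v)) ⟪gradient f (x + t • v), v⟫ t := by
  have hline : HasDerivAt (fun s : ℝ => x + s • v) v t := by
    simpa using ((hasDerivAt_id t).smul_const v).const_add x
  simpa [InnerProductSpace.toDual_apply_apply, Function.comp_def] using
    (hf (x + t • v)).hasGradientAt.hasFDerivAt.comp_hasDerivAt t hline

theorem inner_gradient_add_smul_sub_le
    (hsmooth : ∀ x y : E, ‖gradient f x - gradient f y‖ ≤ L * ‖x - y‖)
    (x v : E) {t : ℝ} (ht : 0 ≤ t) :
    ⟪gradient f (x + t • v) - gradient f x, v⟫ ≤ L * t * ‖v‖ ^ 2 :=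
  calc ⟪gradient f (x + t • v) - gradient f x, v⟫
      ≤ ‖gradient f (x + t • v) - gradient f x‖ * ‖v‖ := real_inner_le_norm _ _
    _ ≤ L * ‖(x + t • v) - x‖ * ‖v‖ := by gcongr; exact hsmooth _ _
    _ = L * t * ‖v‖ ^ 2 := by
      rw [add_sub_cancel_left, norm_smul, Real.norm_of_nonneg ht]; ring

theorem le_add_inner_gradient_add_sq_of_lipschitz_gradient (hf : Differentiable ℝ f)
    (hsmooth : ∀ x y : E, ‖gradient f x - gradient f y‖ ≤ L * ‖x - y‖) (x y : E) :
    f y ≤ f x + ⟪gradient f x, y - x⟫ + L / 2 * ‖y - x‖ ^ 2 := by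
  set v := y - x
  -- `φ` has derivative `⟪∇f(x + t v) - ∇f x, v⟫ - L t ‖v‖² ≤ 0`, so `φ 1 ≤ φ 0`.
  set φ : ℝ → ℝ := fun t => f (x + t • v) - t * ⟪gradient f x, v⟫ - L / 2 * t ^ 2 * ‖v‖ ^ 2
  have hφ : ∀ t, HasDerivAt φ (⟪gradient f (x + t • v) - gradient f x, v⟫ - L * t * ‖v‖ ^ 2) t := by
    intro t
    refine (((hasDerivAt_comp_add_smul_of_differentiable hf x v t).sub
      ((hasDerivAt_id t).mul_const ⟪gradient f x, v⟫)).sub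
      (((hasDerivAt_pow 2 t).const_mul (L / 2)).mul_const (‖v‖ ^ 2))).congr_deriv ?_
    rw [inner_sub_left]; ring
  have hanti : AntitoneOn φ (Set.Icc 0 1) := by
    refine antitoneOn_of_deriv_nonpos (convex_Icc 0 1)
      (fun t _ => (hφ t).continuousAt.continuousWithinAt)
      (fun t _ => (hφ t).differentiableAt.differentiableWithinAt) fun t ht => ?_
    rw [interior_Icc] at ht
    rw [(hφ t).deriv, sub_nonpos]
    exact inner_gradient_add_smul_sub_le hsmooth x v ht.1.le
  have h10 : φ 1 ≤ φ 0 := hanti (by norm_num) (by norm_num) zero_le_one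
  simp only [φ, v, one_smul, zero_smul, add_zero, add_sub_cancel] at h10
  linarith

end Descent

theorem stmt_2_general (d : ℕ) (f : EuclideanSpace ℝ (Fin d) → ℝ) (L : ℝ)
    (hf : Differentiable ℝ f)
    (hsmooth : ∀ x y : EuclideanSpace ℝ (Fin d),
      ‖gradient f x - gradient f y‖ ≤ L * ‖x - y‖)
    (μ fstar : ℝ)
    (hpl : ∀ x : EuclideanSpace ℝ (Fin d), ‖gradient f x‖ ^ 2 ≥ 2 * μ * (f x - fstar))
    (η : ℝ) (hη : 0 < η) (x g x' : EuclideanSpace ℝ (Fin d))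
    (hx' : x' = x - η • g) :
    f x' - fstar ≤ (1 - μ * η) * (f x - fstar)
      - (1 / (2 * η) - L / 2) * ‖x' - x‖ ^ 2
      + η / 2 * ‖g - gradient f x‖ ^ 2 := by
  have hstep : x' - x = -(η • g) := by rw [hx']; abel
  have hdescent := le_add_inner_gradient_add_sq_of_lipschitz_gradient hf hsmooth x x'
  have hnorm : ‖x' - x‖ ^ 2 = η ^ 2 * ‖g‖ ^ 2 := by
    rw [hstep, norm_neg, norm_smul, mul_pow, Real.norm_eq_abs, sq_abs]
  have hinner : ⟪gradient f x, x' - x⟫ = -(η * ⟪g, gradient f x⟫) := by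
    rw [hstep, inner_neg_right, real_inner_smul_right, real_inner_comm]
  have hpolar := norm_sub_sq_real g (gradient f x)
  have hpl_x : η / 2 * (2 * μ * (f x - fstar)) ≤ η / 2 * ‖gradient f x‖ ^ 2 :=
    mul_le_mul_of_nonneg_left (hpl x) (by positivity)
  rw [hinner, hnorm] at hdescent
  rw [hnorm, hpolar]
  field_simp
  nlinarith

theorem stmt_2 (d : ℕ) (f : EuclideanSpace ℝ (Fin d) → ℝ) (L : ℝ) (hL : 0 < L)
    (hf : Differentiable ℝ f)
    (hsmooth : ∀ x y : EuclideanSpace ℝ (Fin d),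
      ‖gradient f x - gradient f y‖ ≤ L * ‖x - y‖)
    (μ fstar : ℝ) (hμ : 0 < μ)
    (hpl : ∀ x : EuclideanSpace ℝ (Fin d), ‖gradient f x‖ ^ 2 ≥ 2 * μ * (f x - fstar))
    (η : ℝ) (hη : 0 < η) (x g x' : EuclideanSpace ℝ (Fin d))
    (hx' : x' = x - η • g) :
    f x' - fstar ≤ (1 - μ * η) * (f x - fstar)
      - (1 / (2 * η) - L / 2) * ‖x' - x‖ ^ 2
      + η / 2 * ‖g - gradient f x‖ ^ 2 :=
  stmt_2_general d f L hf hsmooth μ fstar hpl η hη x g x' hx'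
end

section
/- Let d, n ≥ 1, let f_1, …, f_n : ℝ^d → ℝ be differentiable with f := (1/n)∑_{i=1}^n f_i, and suppose the family is average L-smooth for some L > 0, i.e. (1/n)∑_{i=1}^n ‖∇f_i(x) − ∇f_i(y)‖² ≤ L²‖x − y‖² for all x, y. Let x, x', g ∈ ℝ^d and let b' ≥ 1 be an integer. Then, averaging over all tuples j = (j_1, …, j_{b'}) ∈ {1, …, n}^{b'}, (1/n^{b'}) ∑_{j ∈ {1,…,n}^{b'}} ‖ g + (1/b')∑_{k=1}^{b'} (∇f_{j_k}(x') − ∇f_{j_k}(x)) − ∇f(x') ‖² ≤ (L²/b')‖x' − x‖² + ‖g − ∇f(x)‖². -/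
open scoped RealInnerProductSpace

/-!
With `Yᵢ = ∇fᵢ(x') - ∇fᵢ(x)` and `Ȳ` their mean, the estimator error is `c + (1/b')∑ₖ Y_{jₖ}` with
`c = g - ∇f(x')`, and `c + Ȳ = g - ∇f(x)`. Averaged over all tuples this is a bias–variance
decomposition: after centering the `Yᵢ` the cross terms vanish and the second moment of a sum of
`b'` independent draws is `b'` times that of one draw, so the average equals
`‖g - ∇f(x)‖² + (1/(b' n)) ∑ᵢ ‖Yᵢ - Ȳ‖²`. The centered second moment is at most the raw one,
which average smoothness bounds by `n L² ‖x' - x‖²`.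
-/

theorem Fintype.sum_pi_fin_succ {α M : Type*} [Fintype α] [AddCommMonoid M] {b : ℕ}
    (φ : (Fin (b + 1) → α) → M) :
    ∑ j, φ j = ∑ i, ∑ j : Fin b → α, φ (Fin.cons i j) := by
  rw [← (Fin.consEquiv fun _ => α).sum_comp, Fintype.sum_prod_type]
  rfl

section SamplingWithReplacement

variable {E : Type*} {n : ℕ}

theorem sum_pi_sum_comp_eq_zero [AddCommMonoid E] (W : Fin n → E) (hW : ∑ i, W i = 0) :
    ∀ b : ℕ, ∑ j : Fin b → Fin n, ∑ k, W (j k) = 0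
  | 0 => by simp
  | b + 1 => by
    simp only [Fintype.sum_pi_fin_succ, Fin.sum_univ_succ, Fin.cons_zero, Fin.cons_succ,
      Finset.sum_add_distrib, sum_pi_sum_comp_eq_zero W hW b]
    rw [Finset.sum_comm]
    simp [hW]

variable [NormedAddCommGroup E] [InnerProductSpace ℝ E]

theorem sum_pi_norm_sum_comp_sq (W : Fin n → E) (hW : ∑ i, W i = 0) :
    ∀ b : ℕ, n * ∑ j : Fin b → Fin n, ‖∑ k, W (j k)‖ ^ 2 = b * n ^ b * ∑ i, ‖W i‖ ^ 2
  | 0 => by simp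
  | b + 1 => by
    have ih := sum_pi_norm_sum_comp_sq W hW b
    simp only [Fintype.sum_pi_fin_succ, Fin.sum_univ_succ, Fin.cons_zero, Fin.cons_succ,
      norm_add_sq_real, Finset.sum_add_distrib, ← inner_sum, ← Finset.mul_sum,
      sum_pi_sum_comp_eq_zero W hW b, inner_zero_right, mul_zero, Finset.sum_const_zero,
      add_zero, Finset.sum_const, Finset.card_univ, Fintype.card_fun, Fintype.card_fin,
      nsmul_eq_mul]
    push_cast
    linear_combination (n : ℝ) * ih

theorem sum_norm_sub_average_sq_le (Y : Fin n → E) :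
    ∑ i, ‖Y i - (n : ℝ)⁻¹ • ∑ i, Y i‖ ^ 2 ≤ ∑ i, ‖Y i‖ ^ 2 := by
  set μ := (n : ℝ)⁻¹ • ∑ i, Y i
  have hsum : ∑ i, ⟪Y i, μ⟫ = n * ‖μ‖ ^ 2 := by
    rcases eq_or_ne n 0 with rfl | hn
    · simp
    rw [← sum_inner, ← real_inner_self_eq_norm_sq, ← real_inner_smul_left, smul_smul,
      mul_inv_cancel₀ (Nat.cast_ne_zero.mpr hn), one_smul]
  simp only [norm_sub_sq_real, Finset.sum_add_distrib, Finset.sum_sub_distrib, ← Finset.mul_sum,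
    hsum, Finset.sum_const, Finset.card_univ, Fintype.card_fin, nsmul_eq_mul]
  linarith [mul_nonneg (Nat.cast_nonneg n : (0 : ℝ) ≤ n) (sq_nonneg ‖μ‖)]

theorem average_pi_norm_add_sample_mean_sq (c : E) (Y : Fin n → E) {b : ℕ} (hn : n ≠ 0)
    (hb : b ≠ 0) :
    ((n : ℝ) ^ b)⁻¹ * ∑ j : Fin b → Fin n, ‖c + (b : ℝ)⁻¹ • ∑ k, Y (j k)‖ ^ 2
      = ‖c + (n : ℝ)⁻¹ • ∑ i, Y i‖ ^ 2
        + ((b : ℝ) * n)⁻¹ * ∑ i, ‖Y i - (n : ℝ)⁻¹ • ∑ i, Y i‖ ^ 2 := by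
  set μ := (n : ℝ)⁻¹ • ∑ i, Y i
  set W := fun i => Y i - μ
  have hn' : (n : ℝ) ≠ 0 := Nat.cast_ne_zero.mpr hn
  have hb' : (b : ℝ) ≠ 0 := Nat.cast_ne_zero.mpr hb
  have hW : ∑ i, W i = 0 := by
    simp only [W, Finset.sum_sub_distrib, Finset.sum_const, Finset.card_univ, Fintype.card_fin,
      μ, ← Nat.cast_smul_eq_nsmul ℝ, smul_smul, mul_inv_cancel₀ hn', one_smul, sub_self]
  have hsplit (j : Fin b → Fin n) :
      c + (b : ℝ)⁻¹ • ∑ k, Y (j k) = (c + μ) + (b : ℝ)⁻¹ • ∑ k, W (j k) := by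
    simp only [W, Finset.sum_sub_distrib, Finset.sum_const, Finset.card_univ, Fintype.card_fin,
      ← Nat.cast_smul_eq_nsmul ℝ, smul_sub, smul_smul, inv_mul_cancel₀ hb', one_smul]
    abel
  have hvar := sum_pi_norm_sum_comp_sq W hW b
  simp only [hsplit, norm_add_sq_real, norm_smul, inner_smul_right, mul_pow, Real.norm_eq_abs,
    sq_abs, Finset.sum_add_distrib, ← Finset.mul_sum, ← inner_sum, sum_pi_sum_comp_eq_zero W hW,
    inner_zero_right, mul_zero, add_zero, Finset.sum_const, Finset.card_univ, Fintype.card_fun,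
    Fintype.card_fin, ← Nat.cast_smul_eq_nsmul ℝ]
  push_cast
  field_simp
  linear_combination hvar

end SamplingWithReplacement

theorem gradient_const_mul_sum {F ι : Type*} [NormedAddCommGroup F] [InnerProductSpace ℝ F]
    [CompleteSpace F] [Fintype ι] (f : ι → F → ℝ) (c : ℝ) {x : F}
    (hf : ∀ i, DifferentiableAt ℝ (f i) x) :
    gradient (fun y => c * ∑ i, f i y) x = c • ∑ i, gradient (f i) x := by
  have h := (HasFDerivAt.fun_sum (u := Finset.univ) fun i _ => (hf i).hasFDerivAt).const_mul c
  simp only [gradient, h.fderiv, map_smul, map_sum]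

theorem stmt_5_general (d n : ℕ) (hn : 1 ≤ n)
    (f : Fin n → EuclideanSpace ℝ (Fin d) → ℝ)
    (hf : ∀ i, Differentiable ℝ (f i))
    (F : EuclideanSpace ℝ (Fin d) → ℝ)
    (hF : F = fun x => (1 / (n : ℝ)) * ∑ i, f i x)
    (L : ℝ)
    (havg : ∀ x y : EuclideanSpace ℝ (Fin d),
      (1 / (n : ℝ)) * ∑ i, ‖gradient (f i) x - gradient (f i) y‖ ^ 2
        ≤ L ^ 2 * ‖x - y‖ ^ 2)
    (x x' g : EuclideanSpace ℝ (Fin d)) (b' : ℕ) (hb' : 1 ≤ b') :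
    (1 / (n : ℝ) ^ b') * ∑ j : Fin b' → Fin n,
        ‖(g + (1 / (b' : ℝ)) • ∑ k, (gradient (f (j k)) x' - gradient (f (j k)) x))
          - gradient F x'‖ ^ 2
      ≤ L ^ 2 / (b' : ℝ) * ‖x' - x‖ ^ 2 + ‖g - gradient F x‖ ^ 2 := by
  set Y : Fin n → EuclideanSpace ℝ (Fin d) := fun i => gradient (f i) x' - gradient (f i) x
  have hgradF y : gradient F y = (n : ℝ)⁻¹ • ∑ i, gradient (f i) y := by
    rw [hF, one_div, gradient_const_mul_sum f _ fun i => (hf i).differentiableAt]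
  have hmean : g - gradient F x' + (n : ℝ)⁻¹ • ∑ i, Y i = g - gradient F x := by
    simp only [Y, Finset.sum_sub_distrib, smul_sub, hgradF]
    abel
  have hvariance_le : ((b' : ℝ) * n)⁻¹ * ∑ i, ‖Y i - (n : ℝ)⁻¹ • ∑ i, Y i‖ ^ 2
      ≤ L ^ 2 / b' * ‖x' - x‖ ^ 2 := by
    calc ((b' : ℝ) * n)⁻¹ * ∑ i, ‖Y i - (n : ℝ)⁻¹ • ∑ i, Y i‖ ^ 2
        ≤ (b' : ℝ)⁻¹ * ((n : ℝ)⁻¹ * ∑ i, ‖Y i‖ ^ 2) := by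
          rw [mul_inv, mul_assoc]
          gcongr ?_ * (_ * ?_)
          exact sum_norm_sub_average_sq_le Y
      _ ≤ (b' : ℝ)⁻¹ * (L ^ 2 * ‖x' - x‖ ^ 2) := by
          gcongr ?_ * ?_
          simpa only [one_div] using havg x' x
      _ = L ^ 2 / b' * ‖x' - x‖ ^ 2 := by ring
  have hsample := average_pi_norm_add_sample_mean_sq (g - gradient F x') Y
    (by omega : n ≠ 0) (by omega : b' ≠ 0)
  calc _ = ((n : ℝ) ^ b')⁻¹ * ∑ j : Fin b' → Fin n,
          ‖g - gradient F x' + (b' : ℝ)⁻¹ • ∑ k, Y (j k)‖ ^ 2 := by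
        simp only [one_div, add_sub_right_comm g, Y]
    _ ≤ _ := by
        rw [hsample, hmean]
        linarith [hvariance_le]

theorem stmt_5 (d n : ℕ) (hd : 1 ≤ d) (hn : 1 ≤ n)
    (f : Fin n → EuclideanSpace ℝ (Fin d) → ℝ)
    (hf : ∀ i, Differentiable ℝ (f i))
    (F : EuclideanSpace ℝ (Fin d) → ℝ)
    (hF : F = fun x => (1 / (n : ℝ)) * ∑ i, f i x)
    (L : ℝ) (hL : 0 < L)
    (havg : ∀ x y : EuclideanSpace ℝ (Fin d),
      (1 / (n : ℝ)) * ∑ i, ‖gradient (f i) x - gradient (f i) y‖ ^ 2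
        ≤ L ^ 2 * ‖x - y‖ ^ 2)
    (x x' g : EuclideanSpace ℝ (Fin d)) (b' : ℕ) (hb' : 1 ≤ b') :
    (1 / (n : ℝ) ^ b') * ∑ j : Fin b' → Fin n,
        ‖(g + (1 / (b' : ℝ)) • ∑ k, (gradient (f (j k)) x' - gradient (f (j k)) x))
          - gradient F x'‖ ^ 2
      ≤ L ^ 2 / (b' : ℝ) * ‖x' - x‖ ^ 2 + ‖g - gradient F x‖ ^ 2 :=
  stmt_5_general d n hn f hf F hF L havg x x' g b' hb'
end

section
/- Let d, n ≥ 1, let f_1, …, f_n : ℝ^d → ℝ be differentiable with f := (1/n)∑_{i=1}^n f_i, suppose the family is average L-smooth for some L > 0, i.e. (1/n)∑_{i=1}^n ‖∇f_i(x) − ∇f_i(y)‖² ≤ L²‖x − y‖² for all x, y, and suppose the bounded-variance condition (1/n)∑_{i=1}^n ‖∇f_i(x) − ∇f(x)‖² ≤ σ² holds for all x ∈ ℝ^d, where σ ≥ 0. Let x, x', g ∈ ℝ^d, let b, b' ≥ 1 be integers and p ∈ (0, 1]. Then p · (1/n^b) ∑_{i ∈ {1,…,n}^b} ‖(1/b)∑_{k=1}^{b}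 ∇f_{i_k}(x') − ∇f(x')‖² + (1 − p) · (1/n^{b'}) ∑_{j ∈ {1,…,n}^{b'}} ‖ g + (1/b')∑_{k=1}^{b'} (∇f_{j_k}(x') − ∇f_{j_k}(x)) − ∇f(x') ‖² ≤ p σ²/b + ((1 − p) L²/b')‖x' − x‖² + (1 − p)‖g − ∇f(x)‖². -/
/-!
Sampling indices independently and uniformly, two distinct draws of a minibatch are independent,
so for centred vectors `w` all cross terms `⟪w (i k), w (i l)⟫`, `k ≠ l`, average to zero. Hence
the mean squared error of a minibatch mean of `b` samples is `1 / b` times the population variance.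
The fresh-gradient branch of PAGE therefore costs at most `σ² / b`; the correction branch costs
`‖g - ∇f(x)‖²` plus `1 / b'` times the variance of the differences `∇fᵢ(x') - ∇fᵢ(x)`, which is
at most their second moment, hence at most `L² ‖x' - x‖²`.
-/

open scoped RealInnerProductSpace BigOperators
open Finset Fintype

section PiSum
variable {ι κ M : Type*} [Fintype ι] [Fintype κ] [DecidableEq κ] [AddCommMonoid M]

theorem Fintype.sum_pi_comp_eval (k : κ) (φ : ι → M) :
    ∑ i : κ → ι, φ (i k) = card ι ^ (card κ - 1) • ∑ j, φ j := by
  rw [← (Equiv.funSplitAt k ι).symm.sum_comp]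
  simp [Fintype.sum_prod_type, Fintype.card_subtype_compl, Finset.smul_sum]

theorem Fintype.sum_pi_comp_eval_eval {k l : κ} (hkl : k ≠ l) (ψ : ι → ι → M) :
    ∑ i : κ → ι, ψ (i k) (i l) = card ι ^ (card κ - 2) • ∑ a, ∑ b, ψ a b := by
  rw [← (Equiv.funSplitAt l ι).symm.sum_comp, Fintype.sum_prod_type, Finset.sum_comm]
  simp only [Equiv.funSplitAt_symm_apply, dif_pos, dif_neg hkl]
  rw [Fintype.sum_pi_comp_eval (⟨k, hkl⟩ : {j // j ≠ l}) (fun a => ∑ b, ψ a b)]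
  simp [Fintype.card_subtype_compl, Nat.sub_sub]

end PiSum

section Minibatch
variable {E : Type*} [NormedAddCommGroup E] [InnerProductSpace ℝ E]
  {ι κ : Type*} [Fintype ι] [Fintype κ] [DecidableEq κ]

theorem sum_pi_inner_sum_comp_eq_zero (c : E) {w : ι → E} (hw : ∑ j, w j = 0) :
    ∑ i : κ → ι, ⟪c, ∑ k, w (i k)⟫ = 0 := by
  simp_rw [inner_sum]
  rw [Finset.sum_comm]
  simp [Fintype.sum_pi_comp_eval, ← inner_sum, hw]

theorem sum_pi_norm_sum_comp_sq_s6 {w : ι → E} (hw : ∑ j, w j = 0) :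
    ∑ i : κ → ι, ‖∑ k, w (i k)‖ ^ 2
      = card κ * card ι ^ (card κ - 1) * ∑ j, ‖w j‖ ^ 2 := by
  have hdiag (l : κ) : ∑ i : κ → ι, ∑ k, ⟪w (i k), w (i l)⟫
      = card ι ^ (card κ - 1) * ∑ j, ‖w j‖ ^ 2 := by
    rw [Finset.sum_comm, Finset.sum_eq_single l]
    · simp only [real_inner_self_eq_norm_sq]
      rw [Fintype.sum_pi_comp_eval l (fun j => ‖w j‖ ^ 2), nsmul_eq_mul, Nat.cast_pow]
    · intro k _ hkl
      rw [Fintype.sum_pi_comp_eval_eval hkl (fun a b => ⟪w a, w b⟫)]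
      simp [← inner_sum, hw]
    · simp
  calc ∑ i : κ → ι, ‖∑ k, w (i k)‖ ^ 2 = ∑ l, ∑ i : κ → ι, ∑ k, ⟪w (i k), w (i l)⟫ := by
        simp only [← real_inner_self_eq_norm_sq, sum_inner, inner_sum]
        exact Finset.sum_comm
    _ = _ := by simp [hdiag, mul_assoc]

theorem sum_pi_norm_add_smul_sum_comp_sq (c : E) {w : ι → E} (hw : ∑ j, w j = 0) (t : ℝ) :
    ∑ i : κ → ι, ‖c + t • ∑ k, w (i k)‖ ^ 2
      = card ι ^ card κ * ‖c‖ ^ 2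
        + t ^ 2 * (card κ * card ι ^ (card κ - 1) * ∑ j, ‖w j‖ ^ 2) := by
  simp_rw [norm_add_sq_real, inner_smul_right, norm_smul, mul_pow, Real.norm_eq_abs, sq_abs]
  rw [Finset.sum_add_distrib, Finset.sum_add_distrib, ← Finset.mul_sum, ← Finset.mul_sum,
    ← Finset.mul_sum, sum_pi_inner_sum_comp_eq_zero c hw, sum_pi_norm_sum_comp_sq_s6 hw]
  simp

theorem inv_card_pow_mul_sum_pi_norm_add_sub_sq [Nonempty ι] [Nonempty κ] (c : E) (v : ι → E)
    {m : E} (hm : (card ι : ℝ)⁻¹ • ∑ j, v j = m) :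
    ((card ι : ℝ) ^ card κ)⁻¹ * ∑ i : κ → ι, ‖c + ((card κ : ℝ)⁻¹ • ∑ k, v (i k) - m)‖ ^ 2
      = ‖c‖ ^ 2 + ((card ι : ℝ) * card κ)⁻¹ * ∑ j, ‖v j - m‖ ^ 2 := by
  have hN : (card ι : ℝ) ≠ 0 := Nat.cast_ne_zero.2 card_ne_zero
  have hB : (card κ : ℝ) ≠ 0 := Nat.cast_ne_zero.2 card_ne_zero
  have hcentered : ∑ j, (v j - m) = 0 := by
    rw [Finset.sum_sub_distrib, ← hm, Finset.sum_const, Finset.card_univ,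
      ← Nat.cast_smul_eq_nsmul ℝ, smul_smul, mul_inv_cancel₀ hN, one_smul, sub_self]
  have hbatch (i : κ → ι) :
      (card κ : ℝ)⁻¹ • ∑ k, v (i k) - m = (card κ : ℝ)⁻¹ • ∑ k, (v (i k) - m) := by
    rw [Finset.sum_sub_distrib, Finset.sum_const, Finset.card_univ, smul_sub,
      ← Nat.cast_smul_eq_nsmul ℝ, smul_smul, inv_mul_cancel₀ hB, one_smul]
  simp_rw [hbatch]
  rw [sum_pi_norm_add_smul_sum_comp_sq c hcentered,
    ← mul_pow_sub_one card_ne_zero (card ι : ℝ)]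
  field_simp

theorem sum_norm_sub_sq_le_sum_norm_sq {a : ι → E} {m : E}
    (hm : (card ι : ℝ)⁻¹ • ∑ j, a j = m) :
    ∑ j, ‖a j - m‖ ^ 2 ≤ ∑ j, ‖a j‖ ^ 2 := by
  have hsum : ∑ j, a j = (card ι : ℝ) • m := by
    rcases isEmpty_or_nonempty ι with _ | _
    · simp
    · rw [← hm, smul_smul, mul_inv_cancel₀ (Nat.cast_ne_zero.2 card_ne_zero), one_smul]
  have hdecomp : ∑ j, ‖a j - m‖ ^ 2 = ∑ j, ‖a j‖ ^ 2 - card ι * ‖m‖ ^ 2 := by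
    simp_rw [norm_sub_sq_real]
    rw [Finset.sum_add_distrib, Finset.sum_sub_distrib, ← Finset.mul_sum, ← sum_inner, hsum,
      real_inner_smul_left, real_inner_self_eq_norm_sq, Finset.sum_const, Finset.card_univ,
      nsmul_eq_mul]
    ring
  rw [hdecomp]
  exact sub_le_self _ (by positivity)

theorem inv_card_pow_mul_sum_pi_norm_sub_sq_le [Nonempty ι] [Nonempty κ] (v : ι → E) {m : E}
    (hm : (card ι : ℝ)⁻¹ • ∑ j, v j = m) {s : ℝ}
    (hv : (card ι : ℝ)⁻¹ * ∑ j, ‖v j - m‖ ^ 2 ≤ s) :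
    ((card ι : ℝ) ^ card κ)⁻¹ * ∑ i : κ → ι, ‖(card κ : ℝ)⁻¹ • ∑ k, v (i k) - m‖ ^ 2
      ≤ s / card κ := by
  have h := inv_card_pow_mul_sum_pi_norm_add_sub_sq (κ := κ) 0 v hm
  simp only [zero_add, norm_zero, zero_pow two_ne_zero] at h
  rw [h, mul_inv, mul_comm (card ι : ℝ)⁻¹, mul_assoc, inv_mul_eq_div]
  exact div_le_div_of_nonneg_right hv (Nat.cast_nonneg _)

theorem inv_card_pow_mul_sum_pi_norm_add_sub_sq_le [Nonempty ι] [Nonempty κ] (c : E)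
    (v : ι → E) {m : E} (hm : (card ι : ℝ)⁻¹ • ∑ j, v j = m) {s : ℝ}
    (hv : (card ι : ℝ)⁻¹ * ∑ j, ‖v j‖ ^ 2 ≤ s) :
    ((card ι : ℝ) ^ card κ)⁻¹ * ∑ i : κ → ι, ‖c + ((card κ : ℝ)⁻¹ • ∑ k, v (i k) - m)‖ ^ 2
      ≤ ‖c‖ ^ 2 + s / card κ := by
  rw [inv_card_pow_mul_sum_pi_norm_add_sub_sq c v hm, mul_inv, mul_comm (card ι : ℝ)⁻¹,
    mul_assoc, inv_mul_eq_div]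
  gcongr
  exact (mul_le_mul_of_nonneg_left (sum_norm_sub_sq_le_sum_norm_sq hm) (by positivity)).trans hv

end Minibatch

section Gradient
variable {E ι : Type*} [NormedAddCommGroup E] [InnerProductSpace ℝ E] [CompleteSpace E]
  {x : E}

theorem HasGradientAt.fun_sum {s : Finset ι} {f : ι → E → ℝ} {f' : ι → E}
    (h : ∀ i ∈ s, HasGradientAt (f i) (f' i) x) :
    HasGradientAt (fun y => ∑ i ∈ s, f i y) (∑ i ∈ s, f' i) x := by
  rw [hasGradientAt_iff_hasFDerivAt, map_sum]
  exact HasFDerivAt.fun_sum fun i hi => (h i hi).hasFDerivAt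

theorem HasGradientAt.const_mul {f : E → ℝ} {f' : E} (c : ℝ) (h : HasGradientAt f f' x) :
    HasGradientAt (fun y => c * f y) (c • f') x := by
  rw [hasGradientAt_iff_hasFDerivAt, map_smul]
  exact h.hasFDerivAt.const_mul c

end Gradient

theorem stmt_6_general (d n : ℕ) (hn : 1 ≤ n)
    (f : Fin n → EuclideanSpace ℝ (Fin d) → ℝ)
    (hf : ∀ i, Differentiable ℝ (f i))
    (F : EuclideanSpace ℝ (Fin d) → ℝ)
    (hF : F = fun x => (1 / (n : ℝ)) * ∑ i, f i x)
    (L : ℝ)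
    (havg : ∀ x y : EuclideanSpace ℝ (Fin d),
      (1 / (n : ℝ)) * ∑ i, ‖gradient (f i) x - gradient (f i) y‖ ^ 2
        ≤ L ^ 2 * ‖x - y‖ ^ 2)
    (σ : ℝ)
    (hbv : ∀ x : EuclideanSpace ℝ (Fin d),
      (1 / (n : ℝ)) * ∑ i, ‖gradient (f i) x - gradient F x‖ ^ 2 ≤ σ ^ 2)
    (x x' g : EuclideanSpace ℝ (Fin d)) (b b' : ℕ) (hb : 1 ≤ b) (hb' : 1 ≤ b')
    (p : ℝ) (hp0 : 0 < p) (hp1 : p ≤ 1) :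
    p * ((1 / (n : ℝ) ^ b) * ∑ i : Fin b → Fin n,
        ‖((1 / (b : ℝ)) • ∑ k, gradient (f (i k)) x') - gradient F x'‖ ^ 2)
    + (1 - p) * ((1 / (n : ℝ) ^ b') * ∑ j : Fin b' → Fin n,
        ‖(g + (1 / (b' : ℝ)) • ∑ k, (gradient (f (j k)) x' - gradient (f (j k)) x))
          - gradient F x'‖ ^ 2)
      ≤ p * σ ^ 2 / (b : ℝ) + (1 - p) * L ^ 2 / (b' : ℝ) * ‖x' - x‖ ^ 2
        + (1 - p) * ‖g - gradient F x‖ ^ 2 := by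
  have : NeZero n := ⟨by omega⟩
  have : NeZero b := ⟨by omega⟩
  have : NeZero b' := ⟨by omega⟩
  have hgrad (y) : (card (Fin n) : ℝ)⁻¹ • ∑ i, gradient (f i) y = gradient F y := by
    subst hF
    simpa using (((HasGradientAt.fun_sum fun i _ => (hf i y).hasGradientAt).const_mul
      (1 / (n : ℝ))).gradient).symm
  have hgrad_sub : (card (Fin n) : ℝ)⁻¹ • ∑ i, (gradient (f i) x' - gradient (f i) x)
      = gradient F x' - gradient F x := by
    rw [Finset.sum_sub_distrib, smul_sub, hgrad, hgrad]
  have hfresh := inv_card_pow_mul_sum_pi_norm_sub_sq_le (κ := Fin b) _ (hgrad x')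
    (by simpa [one_div] using hbv x')
  have hcorr := inv_card_pow_mul_sum_pi_norm_add_sub_sq_le (κ := Fin b') (g - gradient F x) _
    hgrad_sub (by simpa [one_div] using havg x' x)
  simp only [Fintype.card_fin] at hfresh hcorr
  have hregroup (j : Fin b' → Fin n) :
      g + (b' : ℝ)⁻¹ • ∑ k, (gradient (f (j k)) x' - gradient (f (j k)) x) - gradient F x'
        = g - gradient F x + ((b' : ℝ)⁻¹ • ∑ k, (gradient (f (j k)) x' - gradient (f (j k)) x)
          - (gradient F x' - gradient F x)) := by
    abel
  simp_rw [one_div, hregroup]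
  have hq : 0 ≤ 1 - p := sub_nonneg.2 hp1
  calc _ ≤ p * (σ ^ 2 / b)
          + (1 - p) * (‖g - gradient F x‖ ^ 2 + L ^ 2 * ‖x' - x‖ ^ 2 / b') := by
        gcongr
    _ = _ := by ring

theorem stmt_6 (d n : ℕ) (hd : 1 ≤ d) (hn : 1 ≤ n)
    (f : Fin n → EuclideanSpace ℝ (Fin d) → ℝ)
    (hf : ∀ i, Differentiable ℝ (f i))
    (F : EuclideanSpace ℝ (Fin d) → ℝ)
    (hF : F = fun x => (1 / (n : ℝ)) * ∑ i, f i x)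
    (L : ℝ) (hL : 0 < L)
    (havg : ∀ x y : EuclideanSpace ℝ (Fin d),
      (1 / (n : ℝ)) * ∑ i, ‖gradient (f i) x - gradient (f i) y‖ ^ 2
        ≤ L ^ 2 * ‖x - y‖ ^ 2)
    (σ : ℝ) (hσ : 0 ≤ σ)
    (hbv : ∀ x : EuclideanSpace ℝ (Fin d),
      (1 / (n : ℝ)) * ∑ i, ‖gradient (f i) x - gradient F x‖ ^ 2 ≤ σ ^ 2)
    (x x' g : EuclideanSpace ℝ (Fin d)) (b b' : ℕ) (hb : 1 ≤ b) (hb' : 1 ≤ b')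
    (p : ℝ) (hp0 : 0 < p) (hp1 : p ≤ 1) :
    p * ((1 / (n : ℝ) ^ b) * ∑ i : Fin b → Fin n,
        ‖((1 / (b : ℝ)) • ∑ k, gradient (f (i k)) x') - gradient F x'‖ ^ 2)
    + (1 - p) * ((1 / (n : ℝ) ^ b') * ∑ j : Fin b' → Fin n,
        ‖(g + (1 / (b' : ℝ)) • ∑ k, (gradient (f (j k)) x' - gradient (f (j k)) x))
          - gradient F x'‖ ^ 2)
      ≤ p * σ ^ 2 / (b : ℝ) + (1 - p) * L ^ 2 / (b' : ℝ) * ‖x' - x‖ ^ 2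
        + (1 - p) * ‖g - gradient F x‖ ^ 2 :=
  stmt_6_general d n hn f hf F hF L havg σ hbv x x' g b b' hb hb' p hp0 hp1
end

section
/- Let (Ω, ℱ, P) be a probability space, let f : ℝ^d → ℝ be differentiable and L-smooth with L > 0, and suppose f(x) ≥ f* for all x ∈ ℝ^d. Let p ∈ (0, 1], b > 0, b' > 0, σ ≥ 0, and 0 < η ≤ 1/(L(1 + √((1 − p)/(p b')))). Let x⁰ ∈ ℝ^d and let x_t, g_t : Ω → ℝ^d (t = 0, 1, 2, …) be measurable with x_0 = x⁰, E‖g_0 − ∇f(x⁰)‖² ≤ σ²/b, x_{t+1} = x_t − η g_t almost surely, and suppose f ∘ x_t, ‖∇f(x_t)‖², ‖g_t − ∇f(x_t)‖² and ‖x_{t+1} − x_t‖² are integrable for every t. Assume that for every t ≥ 0 the estimator recursion E‖g_{t+1} − ∇f(x_{t+1})‖² ≤ p σ²/b + ((1 − p) L²/b') · E‖x_{t+1} − x_t‖² + (1 − p) · E‖g_t − ∇f(x_t)‖² holds. Then for every integer T ≥ 1, (1/T)∑_{t=0}^{T−1} E‖∇f(x_t)‖² ≤ 2(f(x⁰) −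 f*)/(η T) + σ²/(p b T) + σ²/b. -/
/-!
L-smoothness gives the descent inequality
`E f(x_{t+1}) ≤ E f(x_t) - η/2 E‖∇f(x_t)‖² + η/2 E‖g_t - ∇f(x_t)‖² - (1/(2η) - L/2) E‖x_{t+1} - x_t‖²`.
Adding `η/(2p)` times the estimator recursion, the error terms telescope in the Lyapunov function
`Φ_t = E f(x_t) + η/(2p) E‖g_t - ∇f(x_t)‖²`, and the step-size condition is exactly what makes the
coefficient of `E‖x_{t+1} - x_t‖²` nonpositive. Hence `Φ_{t+1} ≤ Φ_t - η/2 E‖∇f(x_t)‖² + ησ²/(2b)`;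
summing over `t < T` and using `Φ_T ≥ f*`, `Φ_0 ≤ f(x⁰) + ησ²/(2pb)` gives the bound.
-/

open MeasureTheory

section Descent

variable {E : Type*} [NormedAddCommGroup E] [InnerProductSpace ℝ E] [CompleteSpace E]
  {f : E → ℝ} {L : ℝ}

theorem le_add_inner_gradient_add_sq (hf : Differentiable ℝ f)
    (hsmooth : ∀ x y, ‖gradient f x - gradient f y‖ ≤ L * ‖x - y‖) (x y : E) :
    f y ≤ f x + inner ℝ (gradient f x) (y - x) + L / 2 * ‖y - x‖ ^ 2 := by
  set v := y - x
  set φ : ℝ → ℝ := fun t => f (x + t • v) - t * inner ℝ (gradient f x) v - L / 2 * t ^ 2 * ‖v‖ ^ 2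
  have hφ : ∀ t : ℝ, HasDerivAt φ
      (inner ℝ (gradient f (x + t • v)) v - inner ℝ (gradient f x) v - L * t * ‖v‖ ^ 2) t := by
    intro t
    have hline : HasDerivAt (fun s : ℝ => x + s • v) v t := by
      simpa using ((hasDerivAt_id t).smul_const v).const_add x
    have hcomp := (hf (x + t • v)).hasGradientAt.hasFDerivAt.comp_hasDerivAt t hline
    refine ((hcomp.sub ((hasDerivAt_id t).mul_const (inner ℝ (gradient f x) v))).sub
      (((hasDerivAt_pow 2 t).const_mul (L / 2)).mul_const (‖v‖ ^ 2))).congr_deriv ?_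
    simp only [InnerProductSpace.toDual_apply_apply]
    push_cast
    ring
  have hderiv_nonpos : ∀ t ∈ interior (Set.Ici (0 : ℝ)),
      inner ℝ (gradient f (x + t • v)) v - inner ℝ (gradient f x) v - L * t * ‖v‖ ^ 2 ≤ 0 := by
    intro t ht
    rw [interior_Ici, Set.mem_Ioi] at ht
    calc inner ℝ (gradient f (x + t • v)) v - inner ℝ (gradient f x) v - L * t * ‖v‖ ^ 2
        = inner ℝ (gradient f (x + t • v) - gradient f x) v - L * t * ‖v‖ ^ 2 := by
          rw [inner_sub_left]
      _ ≤ ‖gradient f (x + t • v) - gradient f x‖ * ‖v‖ - L * t * ‖v‖ ^ 2 := by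
          gcongr; exact real_inner_le_norm _ _
      _ ≤ L * ‖(x + t • v) - x‖ * ‖v‖ - L * t * ‖v‖ ^ 2 := by
          gcongr; exact hsmooth _ _
      _ = 0 := by
          rw [add_sub_cancel_left, norm_smul, Real.norm_of_nonneg ht.le]; ring
  have hanti : AntitoneOn φ (Set.Ici 0) :=
    antitoneOn_of_hasDerivWithinAt_nonpos (convex_Ici 0)
      (fun t _ => (hφ t).continuousAt.continuousWithinAt)
      (fun t _ => (hφ t).hasDerivWithinAt) hderiv_nonpos
  have h10 : φ 1 ≤ φ 0 := hanti (Set.mem_Ici.2 le_rfl) (Set.mem_Ici.2 zero_le_one) zero_le_one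
  simp only [φ, one_smul, zero_smul, add_zero, v, add_sub_cancel] at h10
  linarith

theorem apply_le_of_eq_sub_smul (hf : Differentiable ℝ f)
    (hsmooth : ∀ x y, ‖gradient f x - gradient f y‖ ≤ L * ‖x - y‖) {η : ℝ} (hη : η ≠ 0)
    {x g y : E} (hy : y = x - η • g) :
    f y ≤ f x - η / 2 * ‖gradient f x‖ ^ 2 + η / 2 * ‖g - gradient f x‖ ^ 2
      - (1 / (2 * η) - L / 2) * ‖y - x‖ ^ 2 := by
  have hdesc := le_add_inner_gradient_add_sq hf hsmooth x y
  have hyx : y - x = -(η • g) := by rw [hy]; abel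
  have hnorm : ‖y - x‖ ^ 2 = η ^ 2 * ‖g‖ ^ 2 := by
    rw [hyx, norm_neg, norm_smul, mul_pow, Real.norm_eq_abs, sq_abs]
  rw [hnorm, hyx, inner_neg_right, real_inner_smul_right] at hdesc
  have hc : (1 / (2 * η) - L / 2) * (η ^ 2 * ‖g‖ ^ 2) = (η / 2 - L / 2 * η ^ 2) * ‖g‖ ^ 2 := by
    field_simp
  rw [hnorm, hc]
  have hsq := norm_sub_sq_real g (gradient f x)
  rw [real_inner_comm] at hsq
  linear_combination hdesc - η / 2 * hsq

end Descent

section Expectation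

variable {Ω E : Type*} [MeasurableSpace Ω] {P : Measure Ω}
  [NormedAddCommGroup E] [InnerProductSpace ℝ E] [CompleteSpace E] {f : E → ℝ} {L η : ℝ}

theorem integral_apply_le_of_ae_eq_sub_smul (hf : Differentiable ℝ f)
    (hsmooth : ∀ x y, ‖gradient f x - gradient f y‖ ≤ L * ‖x - y‖) (hη : η ≠ 0)
    {X G Y : Ω → E} (hY : ∀ᵐ ω ∂P, Y ω = X ω - η • G ω)
    (hfY : Integrable (fun ω => f (Y ω)) P) (hfX : Integrable (fun ω => f (X ω)) P)
    (hgrad : Integrable (fun ω => ‖gradient f (X ω)‖ ^ 2) P)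
    (herr : Integrable (fun ω => ‖G ω - gradient f (X ω)‖ ^ 2) P)
    (hstep : Integrable (fun ω => ‖Y ω - X ω‖ ^ 2) P) :
    ∫ ω, f (Y ω) ∂P ≤ ∫ ω, f (X ω) ∂P - η / 2 * ∫ ω, ‖gradient f (X ω)‖ ^ 2 ∂P
      + η / 2 * ∫ ω, ‖G ω - gradient f (X ω)‖ ^ 2 ∂P
      - (1 / (2 * η) - L / 2) * ∫ ω, ‖Y ω - X ω‖ ^ 2 ∂P := by
  have hgrad' := hgrad.const_mul (η / 2)
  have herr' := herr.const_mul (η / 2)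
  have hstep' := hstep.const_mul (1 / (2 * η) - L / 2)
  have hA := hfX.sub' hgrad'
  have hB := hA.fun_add herr'
  calc ∫ ω, f (Y ω) ∂P
      ≤ ∫ ω, (f (X ω) - η / 2 * ‖gradient f (X ω)‖ ^ 2 + η / 2 * ‖G ω - gradient f (X ω)‖ ^ 2
          - (1 / (2 * η) - L / 2) * ‖Y ω - X ω‖ ^ 2) ∂P := by
        refine integral_mono_ae hfY (hB.sub' hstep') ?_
        filter_upwards [hY] with ω hω
        exact apply_le_of_eq_sub_smul hf hsmooth hη hω
    _ = _ := by
        rw [integral_sub hB hstep', integral_add hA herr', integral_sub hfX hgrad',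
          integral_const_mul, integral_const_mul, integral_const_mul]

end Expectation

theorem mul_add_sq_mul_le_one_of_le_one_div {L η a : ℝ} (hη0 : 0 < η)
    (hη : η ≤ 1 / (L * (1 + Real.sqrt a))) : η * L + (η * L) ^ 2 * a ≤ 1 := by
  have hs := Real.sqrt_nonneg a
  have hLs : 0 < L * (1 + Real.sqrt a) := one_div_pos.mp (hη0.trans_le hη)
  have hL : 0 < L := pos_of_mul_pos_left hLs (by positivity)
  have hu : η * L * (1 + Real.sqrt a) ≤ 1 := by
    rwa [le_div_iff₀ hLs, ← mul_assoc] at hη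
  have ha : a ≤ Real.sqrt a ^ 2 := Real.sq_sqrt' (x := a) ▸ le_max_left a 0
  have hηL : 0 < η * L := mul_pos hη0 hL
  nlinarith [mul_le_mul_of_nonneg_left ha (sq_nonneg (η * L)), mul_nonneg hηL.le hs]

theorem page_coeff_le {L η p b' : ℝ} (hp : 0 < p) (hη0 : 0 < η)
    (hη : η ≤ 1 / (L * (1 + Real.sqrt ((1 - p) / (p * b'))))) :
    η / (2 * p) * ((1 - p) * L ^ 2 / b') ≤ 1 / (2 * η) - L / 2 := by
  have h := mul_add_sq_mul_le_one_of_le_one_div hη0 hη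
  have : 1 / (2 * η) - L / 2 - η / (2 * p) * ((1 - p) * L ^ 2 / b')
      = (1 - (η * L + (η * L) ^ 2 * ((1 - p) / (p * b')))) / (2 * η) := by
    field_simp
    ring
  linarith [div_nonneg (sub_nonneg.2 h) (by positivity : (0 : ℝ) ≤ 2 * η)]

theorem add_mul_sum_range_le_of_le_sub_add (Φ A : ℕ → ℝ) {h e : ℝ}
    (hΦ : ∀ t, Φ (t + 1) ≤ Φ t - h * A t + e) (T : ℕ) :
    Φ T + h * ∑ t ∈ Finset.range T, A t ≤ Φ 0 + T * e := by
  induction T with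
  | zero => simp
  | succ n ih =>
    rw [Finset.sum_range_succ, Nat.cast_succ]
    linarith [hΦ n]

theorem average_le_of_descent_of_recursion {F A G D : ℕ → ℝ} {p η c q s m : ℝ}
    (hp : 0 < p) (hη : 0 < η) (hcoef : η / (2 * p) * q ≤ c)
    (hdescent : ∀ t, F (t + 1) ≤ F t - η / 2 * A t + η / 2 * G t - c * D t)
    (hrec : ∀ t, G (t + 1) ≤ p * s + q * D t + (1 - p) * G t)
    (hD : ∀ t, 0 ≤ D t) (hG : ∀ t, 0 ≤ G t) (hF : ∀ t, m ≤ F t) (hG0 : G 0 ≤ s)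
    {T : ℕ} (hT : 0 < T) :
    1 / (T : ℝ) * ∑ t ∈ Finset.range T, A t
      ≤ 2 * (F 0 - m) / (η * T) + s / (p * T) + s := by
  set w := η / (2 * p) with hw
  have hw0 : 0 ≤ w := by positivity
  have hwp : w * p = η / 2 := by rw [hw]; field_simp
  -- `w = η / (2p)` is chosen so that `η / 2 + w (1 - p) = w`: the `G`-terms telescope.
  have hΦ : ∀ t, F (t + 1) + w * G (t + 1) ≤ F t + w * G t - η / 2 * A t + η / 2 * s := by
    intro t
    linear_combination hdescent t + mul_le_mul_of_nonneg_left (hrec t) hw0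
      + mul_le_mul_of_nonneg_right hcoef (hD t) + (s - G t) * hwp
  have htele := add_mul_sum_range_le_of_le_sub_add (fun t => F t + w * G t) A hΦ T
  have hT' : (0 : ℝ) < T := Nat.cast_pos.mpr hT
  calc 1 / (T : ℝ) * ∑ t ∈ Finset.range T, A t
      = 2 / (η * T) * (η / 2 * ∑ t ∈ Finset.range T, A t) := by field_simp
    _ ≤ 2 / (η * T) * (F 0 - m + w * s + T * (η / 2 * s)) := by
        gcongr
        linarith [hF T, mul_nonneg hw0 (hG T), mul_le_mul_of_nonneg_left hG0 hw0]
    _ = 2 * (F 0 - m) / (η * T) + s / (p * T) + s := by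
        rw [hw]
        field_simp

theorem stmt_10_general {Ω : Type*} [MeasurableSpace Ω] (P : Measure Ω) [IsProbabilityMeasure P]
    (d : ℕ) (f : EuclideanSpace ℝ (Fin d) → ℝ) (L : ℝ)
    (hf : Differentiable ℝ f)
    (hsmooth : ∀ x y : EuclideanSpace ℝ (Fin d),
      ‖gradient f x - gradient f y‖ ≤ L * ‖x - y‖)
    (fstar : ℝ) (hfstar : ∀ x, fstar ≤ f x)
    (p : ℝ) (hp0 : 0 < p) (b b' : ℝ)
    (σ : ℝ)
    (η : ℝ) (hη0 : 0 < η)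
    (hη : η ≤ 1 / (L * (1 + Real.sqrt ((1 - p) / (p * b')))))
    (x0 : EuclideanSpace ℝ (Fin d))
    (x g : ℕ → Ω → EuclideanSpace ℝ (Fin d))
    (hx0 : ∀ᵐ ω ∂P, x 0 ω = x0)
    (hg0 : ∫ ω, ‖g 0 ω - gradient f x0‖ ^ 2 ∂P ≤ σ ^ 2 / b)
    (hupd : ∀ t, ∀ᵐ ω ∂P, x (t + 1) ω = x t ω - η • g t ω)
    (hint1 : ∀ t, Integrable (fun ω => f (x t ω)) P)
    (hint2 : ∀ t, Integrable (fun ω => ‖gradient f (x t ω)‖ ^ 2) P)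
    (hint3 : ∀ t, Integrable (fun ω => ‖g t ω - gradient f (x t ω)‖ ^ 2) P)
    (hint4 : ∀ t, Integrable (fun ω => ‖x (t + 1) ω - x t ω‖ ^ 2) P)
    (hrec : ∀ t, ∫ ω, ‖g (t + 1) ω - gradient f (x (t + 1) ω)‖ ^ 2 ∂P
        ≤ p * σ ^ 2 / b + ((1 - p) * L ^ 2 / b') * ∫ ω, ‖x (t + 1) ω - x t ω‖ ^ 2 ∂P
          + (1 - p) * ∫ ω, ‖g t ω - gradient f (x t ω)‖ ^ 2 ∂P) :
    ∀ T : ℕ, 1 ≤ T →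
      (1 / (T : ℝ)) * ∑ t ∈ Finset.range T, ∫ ω, ‖gradient f (x t ω)‖ ^ 2 ∂P
        ≤ 2 * (f x0 - fstar) / (η * T) + σ ^ 2 / (p * b * T) + σ ^ 2 / b := by
  intro T hT
  have hF0 : ∫ ω, f (x 0 ω) ∂P = f x0 := by
    rw [integral_congr_ae (hx0.mono fun ω h => by rw [h])]
    simp
  have hG0 : ∫ ω, ‖g 0 ω - gradient f (x 0 ω)‖ ^ 2 ∂P ≤ σ ^ 2 / b := by
    rwa [integral_congr_ae (hx0.mono fun ω h => by rw [h])]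
  have hF : ∀ t, fstar ≤ ∫ ω, f (x t ω) ∂P := fun t => by
    simpa using integral_mono (integrable_const fstar) (hint1 t) fun ω => hfstar _
  have key := average_le_of_descent_of_recursion (s := σ ^ 2 / b) hp0 hη0
    (page_coeff_le hp0 hη0 hη)
    (fun t => integral_apply_le_of_ae_eq_sub_smul hf hsmooth hη0.ne' (hupd t) (hint1 (t + 1))
      (hint1 t) (hint2 t) (hint3 t) (hint4 t))
    (fun t => (hrec t).trans_eq (by ring))
    (fun t => integral_nonneg fun ω => by positivity)
    (fun t => integral_nonneg fun ω => by positivity) hF hG0 hT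
  rw [hF0] at key
  exact key.trans_eq (by ring)

theorem stmt_10 {Ω : Type*} [MeasurableSpace Ω] (P : Measure Ω) [IsProbabilityMeasure P]
    (d : ℕ) (f : EuclideanSpace ℝ (Fin d) → ℝ) (L : ℝ) (hL : 0 < L)
    (hf : Differentiable ℝ f)
    (hsmooth : ∀ x y : EuclideanSpace ℝ (Fin d),
      ‖gradient f x - gradient f y‖ ≤ L * ‖x - y‖)
    (fstar : ℝ) (hfstar : ∀ x, fstar ≤ f x)
    (p : ℝ) (hp0 : 0 < p) (hp1 : p ≤ 1) (b b' : ℝ) (hb : 0 < b) (hb' : 0 < b')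
    (σ : ℝ) (hσ : 0 ≤ σ)
    (η : ℝ) (hη0 : 0 < η)
    (hη : η ≤ 1 / (L * (1 + Real.sqrt ((1 - p) / (p * b')))))
    (x0 : EuclideanSpace ℝ (Fin d))
    (x g : ℕ → Ω → EuclideanSpace ℝ (Fin d))
    (hxm : ∀ t, Measurable (x t)) (hgm : ∀ t, Measurable (g t))
    (hx0 : ∀ᵐ ω ∂P, x 0 ω = x0)
    (hg0 : ∫ ω, ‖g 0 ω - gradient f x0‖ ^ 2 ∂P ≤ σ ^ 2 / b)
    (hupd : ∀ t, ∀ᵐ ω ∂P, x (t + 1) ω = x t ω - η • g t ω)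
    (hint1 : ∀ t, Integrable (fun ω => f (x t ω)) P)
    (hint2 : ∀ t, Integrable (fun ω => ‖gradient f (x t ω)‖ ^ 2) P)
    (hint3 : ∀ t, Integrable (fun ω => ‖g t ω - gradient f (x t ω)‖ ^ 2) P)
    (hint4 : ∀ t, Integrable (fun ω => ‖x (t + 1) ω - x t ω‖ ^ 2) P)
    (hrec : ∀ t, ∫ ω, ‖g (t + 1) ω - gradient f (x (t + 1) ω)‖ ^ 2 ∂P
        ≤ p * σ ^ 2 / b + ((1 - p) * L ^ 2 / b') * ∫ ω, ‖x (t + 1) ω - x t ω‖ ^ 2 ∂P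
          + (1 - p) * ∫ ω, ‖g t ω - gradient f (x t ω)‖ ^ 2 ∂P) :
    ∀ T : ℕ, 1 ≤ T →
      (1 / (T : ℝ)) * ∑ t ∈ Finset.range T, ∫ ω, ‖gradient f (x t ω)‖ ^ 2 ∂P
        ≤ 2 * (f x0 - fstar) / (η * T) + σ ^ 2 / (p * b * T) + σ ^ 2 / b :=
  stmt_10_general P d f L hf hsmooth fstar hfstar p hp0 b b' σ η hη0 hη x0 x g hx0 hg0 hupd hint1
    hint2 hint3 hint4 hrec
end

section
/- Let Δ₀ > 0, L > 0, ε > 0 be real numbers, let b ≥ 1 and let b' be a real number with 1 ≤ b' ≤ √b. Set p := b'/(b + b') and T := (4Δ₀L/ε²)(1 + √b/b') + (b + b')/b'. Then b + T·(p·b + (1 − p)·b') ≤ 3b + 16Δ₀L√b/ε². (Note that p·b + (1 − p)·b' = 2bb'/(b + b').) -/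
theorem stmt_11 (Δ₀ L ε : ℝ) (hΔ : 0 < Δ₀) (hL : 0 < L) (hε : 0 < ε)
    (b : ℕ) (hb : 1 ≤ b) (b' : ℝ) (hb'1 : 1 ≤ b') (hb'b : b' ≤ Real.sqrt b)
    (p T : ℝ) (hp : p = b' / ((b : ℝ) + b'))
    (hT : T = (4 * Δ₀ * L / ε ^ 2) * (1 + Real.sqrt b / b') + ((b : ℝ) + b') / b') :
    (b : ℝ) + T * (p * b + (1 - p) * b')
      ≤ 3 * (b : ℝ) + 16 * Δ₀ * L * Real.sqrt b / ε ^ 2 := by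
  have hbpos : (0:ℝ) < b := by exact_mod_cast hb
  set s := Real.sqrt b with hs
  have hs2 : s ^ 2 = b := Real.sq_sqrt hbpos.le
  have hb'pos : (0:ℝ) < b' := lt_of_lt_of_le one_pos hb'1
  have hsum : (0:ℝ) < (b:ℝ) + b' := by linarith
  have hspos : (0:ℝ) < s := Real.sqrt_pos.2 hbpos
  have he2 : (0:ℝ) < ε ^ 2 := by positivity
  subst hp hT
  -- rewrite the middle term
  have hmid : b' / ((b:ℝ) + b') * b + (1 - b' / ((b:ℝ) + b')) * b'
      = 2 * b * b' / ((b:ℝ) + b') := by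
    field_simp
    ring
  rw [hmid]
  have key : (b:ℝ) * (b' + s) ≤ 2 * s * ((b:ℝ) + b') := by
    have h1 : (b:ℝ) * b' ≤ (b:ℝ) * s := by nlinarith
    nlinarith [mul_pos hspos hb'pos]
  have expand : ((4 * Δ₀ * L / ε ^ 2) * (1 + s / b') + ((b:ℝ) + b') / b')
        * (2 * (b:ℝ) * b' / ((b:ℝ) + b'))
      = 8 * Δ₀ * L / ε ^ 2 * ((b:ℝ) * (b' + s) / ((b:ℝ) + b')) + 2 * b := by
    field_simp
    ring
  rw [expand]
  have hcoef : (0:ℝ) < 8 * Δ₀ * L / ε ^ 2 := by positivity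
  have h2 : (b:ℝ) * (b' + s) / ((b:ℝ) + b') ≤ 2 * s := by
    rw [div_le_iff₀ hsum]; linarith
  have h3 : 8 * Δ₀ * L / ε ^ 2 * ((b:ℝ) * (b' + s) / ((b:ℝ) + b'))
      ≤ 8 * Δ₀ * L / ε ^ 2 * (2 * s) := by
    exact mul_le_mul_of_nonneg_left h2 hcoef.le
  have h4 : 8 * Δ₀ * L / ε ^ 2 * (2 * s) = 16 * Δ₀ * L * s / ε ^ 2 := by ring
  linarith
end

section
/- Let (Ω, ℱ, P) be a probability space, let f : ℝ^d → ℝ be differentiable and L-smooth with L > 0, and suppose f satisfies the PL condition with parameter μ > 0 and value f*, i.e. ‖∇f(x)‖² ≥ 2μ(f(x) − f*) ≥ 0 for all x ∈ ℝ^d. Let p ∈ (0, 1], b > 0, b' > 0, σ ≥ 0, and let η > 0 satisfy μη ≤ p/2 and 1/(2η) − L/2 − ((1 − p) η L²)/(p b') ≥ 0. Let x⁰ ∈ ℝ^d and let x_t, g_t : Ω → ℝ^d (t = 0, 1, 2, …) be measurable with x_0 = x⁰, E‖g_0 − ∇f(x⁰)‖² ≤ σ²/b, x_{t+1} = x_t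 − η g_t almost surely, and suppose f ∘ x_t, ‖g_t − ∇f(x_t)‖² and ‖x_{t+1} − x_t‖² are integrable for every t. Assume that for every t ≥ 0 the estimator recursion E‖g_{t+1} − ∇f(x_{t+1})‖² ≤ p σ²/b + ((1 − p) L²/b') · E‖x_{t+1} − x_t‖² + (1 − p) · E‖g_t − ∇f(x_t)‖² holds. Then for every integer T ≥ 0, E[f(x_T)] − f* ≤ (1 − μη)^T ((f(x⁰) − f*) + η σ²/(p b)) + σ²/(b μ). -/
/-!
Along the iteration, `f` descends by the descent lemma for `L`-smooth functions, up to the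
estimator error `‖g_t - ∇f(x_t)‖²`; combined with the PL inequality this contracts
`E f(x_t) - f*` by the factor `1 - μη`. The estimator recursion lets the error be absorbed into
the Lyapunov function `Φ_t = E f(x_t) - f* + (η/p) E‖g_t - ∇f(x_t)‖²`: the two stepsize conditions
are exactly what makes `Φ_{t+1} ≤ (1 - μη) Φ_t + ησ²/b`, and unrolling this recursion gives the
bound, since `σ²/(bμ)` is its fixed point.
-/

open MeasureTheory
open scoped RealInnerProductSpace

section Descent

variable {E : Type*} [NormedAddCommGroup E] [InnerProductSpace ℝ E] [CompleteSpace E]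

theorem hasDerivAt_comp_add_smul {f : E → ℝ} (hf : Differentiable ℝ f) (x v : E) (t : ℝ) :
    HasDerivAt (fun s : ℝ => f (x + s • v)) ⟪gradient f (x + t • v), v⟫ t := by
  have hline : HasDerivAt (fun s : ℝ => x + s • v) v t := by
    simpa using ((hasDerivAt_id t).smul_const v).const_add x
  simpa [InnerProductSpace.toDual_apply_apply, Function.comp_def] using
    (hf _).hasGradientAt.hasFDerivAt.comp_hasDerivAt t hline

theorem descent_lemma {f : E → ℝ} {L : ℝ} (hf : Differentiable ℝ f)
    (hsmooth : ∀ x y, ‖gradient f x - gradient f y‖ ≤ L * ‖x - y‖) (x y : E) :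
    f y ≤ f x + ⟪gradient f x, y - x⟫ + L / 2 * ‖y - x‖ ^ 2 := by
  set v := y - x
  -- `f` minus its quadratic upper model along the segment is antitone
  set φ : ℝ → ℝ := fun t => f (x + t • v) - t * ⟪gradient f x, v⟫ - L / 2 * t ^ 2 * ‖v‖ ^ 2
  have hφ' : ∀ t, HasDerivAt φ
      (⟪gradient f (x + t • v) - gradient f x, v⟫ - L * t * ‖v‖ ^ 2) t := by
    intro t
    refine (((hasDerivAt_comp_add_smul hf x v t).sub
      ((hasDerivAt_id t).mul_const _)).sub
      (((hasDerivAt_pow 2 t).const_mul (L / 2)).mul_const (‖v‖ ^ 2))).congr_deriv ?_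
    rw [inner_sub_left]
    ring
  have hanti : AntitoneOn φ (Set.Ici 0) := by
    refine antitoneOn_of_hasDerivWithinAt_nonpos (convex_Ici 0)
      (fun t _ => (hφ' t).continuousAt.continuousWithinAt)
      (fun t _ => (hφ' t).hasDerivWithinAt) fun t ht => ?_
    rw [interior_Ici, Set.mem_Ioi] at ht
    have hlip : ‖gradient f (x + t • v) - gradient f x‖ ≤ L * (t * ‖v‖) := by
      simpa [norm_smul, abs_of_pos ht] using hsmooth (x + t • v) x
    calc ⟪gradient f (x + t • v) - gradient f x, v⟫ - L * t * ‖v‖ ^ 2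
        ≤ ‖gradient f (x + t • v) - gradient f x‖ * ‖v‖ - L * t * ‖v‖ ^ 2 :=
          sub_le_sub_right (real_inner_le_norm _ _) _
      _ ≤ L * (t * ‖v‖) * ‖v‖ - L * t * ‖v‖ ^ 2 := by gcongr
      _ = 0 := by ring
  have := hanti (Set.mem_Ici.2 le_rfl) (Set.mem_Ici.2 zero_le_one) zero_le_one
  simp only [φ, v, one_smul, zero_smul, add_zero, add_sub_cancel] at this
  linarith

theorem descent_of_inexact_gradient_step {f : E → ℝ} {L μ fstar η : ℝ} (hf : Differentiable ℝ f)
    (hsmooth : ∀ x y, ‖gradient f x - gradient f y‖ ≤ L * ‖x - y‖) {x g y : E}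
    (hpl : 2 * μ * (f x - fstar) ≤ ‖gradient f x‖ ^ 2) (hη : 0 < η) (hy : y = x - η • g) :
    f y ≤ (1 - μ * η) * f x + μ * η * fstar + η / 2 * ‖g - gradient f x‖ ^ 2
      + (L / 2 - 1 / (2 * η)) * ‖y - x‖ ^ 2 := by
  have hstep : y - x = -(η • g) := by rw [hy]; abel
  have hnorm : ‖y - x‖ ^ 2 = η ^ 2 * ‖g‖ ^ 2 := by
    rw [hstep, norm_neg, norm_smul, Real.norm_eq_abs, abs_of_pos hη, mul_pow]
  have hinner : ⟪gradient f x, y - x⟫ = -(η * ⟪gradient f x, g⟫) := by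
    rw [hstep, inner_neg_right, real_inner_smul_right]
  have hexpand :
      ‖g - gradient f x‖ ^ 2 = ‖g‖ ^ 2 - 2 * ⟪gradient f x, g⟫ + ‖gradient f x‖ ^ 2 := by
    rw [norm_sub_sq_real, real_inner_comm]
  have hscale : 1 / (2 * η) * (η ^ 2 * ‖g‖ ^ 2) = η / 2 * ‖g‖ ^ 2 := by field_simp
  have hpl' := mul_le_mul_of_nonneg_left hpl (by positivity : 0 ≤ η / 2)
  have hdesc := descent_lemma hf hsmooth x y
  rw [hinner, hnorm] at hdesc
  rw [hexpand, hnorm]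
  linarith

theorem integral_descent_of_inexact_gradient_step {Ω : Type*} [MeasurableSpace Ω] {P : Measure Ω}
    [IsProbabilityMeasure P] {f : E → ℝ} {L μ fstar η : ℝ} (hf : Differentiable ℝ f)
    (hsmooth : ∀ x y, ‖gradient f x - gradient f y‖ ≤ L * ‖x - y‖)
    (hpl : ∀ x, 2 * μ * (f x - fstar) ≤ ‖gradient f x‖ ^ 2) (hη : 0 < η) {x g y : Ω → E}
    (hy : ∀ᵐ ω ∂P, y ω = x ω - η • g ω) (hfy : Integrable (fun ω => f (y ω)) P)
    (hfx : Integrable (fun ω => f (x ω)) P)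
    (hV : Integrable (fun ω => ‖g ω - gradient f (x ω)‖ ^ 2) P)
    (hD : Integrable (fun ω => ‖y ω - x ω‖ ^ 2) P) :
    ∫ ω, f (y ω) ∂P ≤ (1 - μ * η) * ∫ ω, f (x ω) ∂P + μ * η * fstar
      + η / 2 * ∫ ω, ‖g ω - gradient f (x ω)‖ ^ 2 ∂P
      + (L / 2 - 1 / (2 * η)) * ∫ ω, ‖y ω - x ω‖ ^ 2 ∂P := by
  have hA := hfx.const_mul (1 - μ * η)
  have hAB := hA.add (integrable_const (μ * η * fstar))
  have hABC := hAB.add (hV.const_mul (η / 2))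
  have hABCD := hABC.add (hD.const_mul (L / 2 - 1 / (2 * η)))
  have hbound := integral_mono_ae hfy hABCD <| hy.mono fun ω hω =>
    descent_of_inexact_gradient_step hf hsmooth (hpl (x ω)) hη hω
  rwa [integral_add' hABC (hD.const_mul _), integral_add' hAB (hV.const_mul _),
    integral_add' hA (integrable_const _), integral_const, integral_const_mul,
    integral_const_mul, integral_const_mul, probReal_univ, one_smul] at hbound

end Descent

theorem sub_le_pow_mul_sub_of_le_mul_add {u : ℕ → ℝ} {a c B : ℝ} (ha : 0 ≤ a)
    (hu : ∀ t, u (t + 1) ≤ a * u t + c) (hB : a * B + c ≤ B) (T : ℕ) :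
    u T - B ≤ a ^ T * (u 0 - B) := by
  induction T with
  | zero => simp
  | succ T ih =>
    calc u (T + 1) - B ≤ a * (u T - B) := by linarith [hu T]
      _ ≤ a * (a ^ T * (u 0 - B)) := by gcongr
      _ = a ^ (T + 1) * (u 0 - B) := by ring

theorem lyapunov_step {L μ fstar p b b' σ η F F' V V' D : ℝ} (hp : 0 < p) (hη : 0 < η)
    (hη1 : μ * η ≤ p / 2) (hη2 : 0 ≤ 1 / (2 * η) - L / 2 - ((1 - p) * η * L ^ 2) / (p * b'))
    (hV : 0 ≤ V) (hD : 0 ≤ D)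
    (hdesc : F' ≤ (1 - μ * η) * F + μ * η * fstar + η / 2 * V + (L / 2 - 1 / (2 * η)) * D)
    (hrec : V' ≤ p * σ ^ 2 / b + ((1 - p) * L ^ 2 / b') * D + (1 - p) * V) :
    F' - fstar + η / p * V' ≤ (1 - μ * η) * (F - fstar + η / p * V) + η * σ ^ 2 / b := by
  have hVcoef : (η / 2 + η / p * (1 - p)) * V ≤ (1 - μ * η) * (η / p) * V := by
    have : (1 - μ * η) * (η / p) - (η / 2 + η / p * (1 - p)) = η / p * (p / 2 - μ * η) := by
      field_simp; ring
    have : 0 ≤ η / p * (p / 2 - μ * η) := mul_nonneg (by positivity) (by linarith)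
    gcongr; linarith
  have hDcoef : (L / 2 - 1 / (2 * η) + η / p * ((1 - p) * L ^ 2 / b')) * D ≤ 0 := by
    refine mul_nonpos_of_nonpos_of_nonneg ?_ hD
    have : L / 2 - 1 / (2 * η) + η / p * ((1 - p) * L ^ 2 / b')
        = -(1 / (2 * η) - L / 2 - ((1 - p) * η * L ^ 2) / (p * b')) := by ring
    linarith
  have hnoise : η / p * (p * σ ^ 2 / b) = η * σ ^ 2 / b := by field_simp
  have hrec' := mul_le_mul_of_nonneg_left hrec (by positivity : 0 ≤ η / p)
  linarith

theorem stmt_14_general {Ω : Type*} [MeasurableSpace Ω] (P : Measure Ω) [IsProbabilityMeasure P]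
    (d : ℕ) (f : EuclideanSpace ℝ (Fin d) → ℝ) (L : ℝ)
    (hf : Differentiable ℝ f)
    (hsmooth : ∀ x y : EuclideanSpace ℝ (Fin d),
      ‖gradient f x - gradient f y‖ ≤ L * ‖x - y‖)
    (μ fstar : ℝ) (hμ : 0 < μ)
    (hpl : ∀ x : EuclideanSpace ℝ (Fin d), ‖gradient f x‖ ^ 2 ≥ 2 * μ * (f x - fstar))
    (p : ℝ) (hp0 : 0 < p) (hp1 : p ≤ 1) (b b' : ℝ) (hb : 0 < b)
    (σ : ℝ)
    (η : ℝ) (hη0 : 0 < η) (hη1 : μ * η ≤ p / 2)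
    (hη2 : 1 / (2 * η) - L / 2 - ((1 - p) * η * L ^ 2) / (p * b') ≥ 0)
    (x0 : EuclideanSpace ℝ (Fin d))
    (x g : ℕ → Ω → EuclideanSpace ℝ (Fin d))
    (hx0 : ∀ᵐ ω ∂P, x 0 ω = x0)
    (hg0 : ∫ ω, ‖g 0 ω - gradient f x0‖ ^ 2 ∂P ≤ σ ^ 2 / b)
    (hupd : ∀ t, ∀ᵐ ω ∂P, x (t + 1) ω = x t ω - η • g t ω)
    (hint1 : ∀ t, Integrable (fun ω => f (x t ω)) P)
    (hint3 : ∀ t, Integrable (fun ω => ‖g t ω - gradient f (x t ω)‖ ^ 2) P)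
    (hint4 : ∀ t, Integrable (fun ω => ‖x (t + 1) ω - x t ω‖ ^ 2) P)
    (hrec : ∀ t, ∫ ω, ‖g (t + 1) ω - gradient f (x (t + 1) ω)‖ ^ 2 ∂P
        ≤ p * σ ^ 2 / b + ((1 - p) * L ^ 2 / b') * ∫ ω, ‖x (t + 1) ω - x t ω‖ ^ 2 ∂P
          + (1 - p) * ∫ ω, ‖g t ω - gradient f (x t ω)‖ ^ 2 ∂P) :
    ∀ T : ℕ, (∫ ω, f (x T ω) ∂P) - fstar
      ≤ (1 - μ * η) ^ T * ((f x0 - fstar) + η * σ ^ 2 / (p * b)) + σ ^ 2 / (b * μ) := by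
  intro T
  set F := fun t => ∫ ω, f (x t ω) ∂P
  set V := fun t => ∫ ω, ‖g t ω - gradient f (x t ω)‖ ^ 2 ∂P
  change F T - fstar ≤ _
  have hF0 : F 0 = f x0 := by
    simp [F, integral_congr_ae (hx0.mono fun ω hω => congrArg f hω)]
  have hV0 : V 0 ≤ σ ^ 2 / b := by
    calc V 0 = ∫ ω, ‖g 0 ω - gradient f x0‖ ^ 2 ∂P :=
          integral_congr_ae (hx0.mono fun ω hω => by simp only [hω])
      _ ≤ σ ^ 2 / b := hg0
  have hV : ∀ t, 0 ≤ V t := fun t => integral_nonneg fun _ => sq_nonneg _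
  have hD : ∀ t, 0 ≤ ∫ ω, ‖x (t + 1) ω - x t ω‖ ^ 2 ∂P :=
    fun t => integral_nonneg fun _ => sq_nonneg _
  have hdesc := fun t => integral_descent_of_inexact_gradient_step hf hsmooth hpl hη0 (hupd t)
    (hint1 (t + 1)) (hint1 t) (hint3 t) (hint4 t)
  have hΦ := sub_le_pow_mul_sub_of_le_mul_add (u := fun t => F t - fstar + η / p * V t)
    (c := η * σ ^ 2 / b) (B := σ ^ 2 / (b * μ)) (by linarith : 0 ≤ 1 - μ * η)
    (fun t => lyapunov_step hp0 hη0 hη1 hη2 (hV t) (hD t) (hdesc t) (hrec t))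
    (le_of_eq (by field_simp; ring)) T
  have hpow : 0 ≤ (1 - μ * η) ^ T := pow_nonneg (by linarith) T
  have hΦ0 : η / p * V 0 ≤ η * σ ^ 2 / (p * b) := by
    calc η / p * V 0 ≤ η / p * (σ ^ 2 / b) := by gcongr
      _ = η * σ ^ 2 / (p * b) := by field_simp
  rw [hF0] at hΦ
  linarith [mul_nonneg (by positivity : 0 ≤ η / p) (hV T), mul_le_mul_of_nonneg_left hΦ0 hpow,
    mul_nonneg hpow (by positivity : 0 ≤ σ ^ 2 / (b * μ))]

theorem stmt_14 {Ω : Type*} [MeasurableSpace Ω] (P : Measure Ω) [IsProbabilityMeasure P]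
    (d : ℕ) (f : EuclideanSpace ℝ (Fin d) → ℝ) (L : ℝ) (hL : 0 < L)
    (hf : Differentiable ℝ f)
    (hsmooth : ∀ x y : EuclideanSpace ℝ (Fin d),
      ‖gradient f x - gradient f y‖ ≤ L * ‖x - y‖)
    (μ fstar : ℝ) (hμ : 0 < μ)
    (hpl : ∀ x : EuclideanSpace ℝ (Fin d), ‖gradient f x‖ ^ 2 ≥ 2 * μ * (f x - fstar))
    (hpl0 : ∀ x : EuclideanSpace ℝ (Fin d), 2 * μ * (f x - fstar) ≥ 0)
    (p : ℝ) (hp0 : 0 < p) (hp1 : p ≤ 1) (b b' : ℝ) (hb : 0 < b) (hb' : 0 < b')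
    (σ : ℝ) (hσ : 0 ≤ σ)
    (η : ℝ) (hη0 : 0 < η) (hη1 : μ * η ≤ p / 2)
    (hη2 : 1 / (2 * η) - L / 2 - ((1 - p) * η * L ^ 2) / (p * b') ≥ 0)
    (x0 : EuclideanSpace ℝ (Fin d))
    (x g : ℕ → Ω → EuclideanSpace ℝ (Fin d))
    (hxm : ∀ t, Measurable (x t)) (hgm : ∀ t, Measurable (g t))
    (hx0 : ∀ᵐ ω ∂P, x 0 ω = x0)
    (hg0 : ∫ ω, ‖g 0 ω - gradient f x0‖ ^ 2 ∂P ≤ σ ^ 2 / b)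
    (hupd : ∀ t, ∀ᵐ ω ∂P, x (t + 1) ω = x t ω - η • g t ω)
    (hint1 : ∀ t, Integrable (fun ω => f (x t ω)) P)
    (hint3 : ∀ t, Integrable (fun ω => ‖g t ω - gradient f (x t ω)‖ ^ 2) P)
    (hint4 : ∀ t, Integrable (fun ω => ‖x (t + 1) ω - x t ω‖ ^ 2) P)
    (hrec : ∀ t, ∫ ω, ‖g (t + 1) ω - gradient f (x (t + 1) ω)‖ ^ 2 ∂P
        ≤ p * σ ^ 2 / b + ((1 - p) * L ^ 2 / b') * ∫ ω, ‖x (t + 1) ω - x t ω‖ ^ 2 ∂P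
          + (1 - p) * ∫ ω, ‖g t ω - gradient f (x t ω)‖ ^ 2 ∂P) :
    ∀ T : ℕ, (∫ ω, f (x T ω) ∂P) - fstar
      ≤ (1 - μ * η) ^ T * ((f x0 - fstar) + η * σ ^ 2 / (p * b)) + σ ^ 2 / (b * μ) :=
  stmt_14_general P d f L hf hsmooth μ fstar hμ hpl p hp0 hp1 b b' hb σ η hη0 hη1 hη2 x0 x g hx0 hg0
    hupd hint1 hint3 hint4 hrec
end

section
/- The function f : ℝ → ℝ defined by f(x) = x² + 3 sin²(x) satisfies f(x) ≥ 0 for all x with f(0) = 0 (so its infimum value is f* = 0), its derivative is f'(x) = 2x + 3 sin(2x), and f satisfies the Polyak–Łojasiewicz condition with parameter μ = 1/32 and value f* = 0: for all x ∈ ℝ, (2x + 3 sin(2x))² ≥ (1/16)(x² + 3 sin²(x)). Moreover, f is not convex. -/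
/-!
Since `|sin x| ≤ |x|`, `f x ≤ 4 x²`, so the PL inequality follows from `|f' x| ≥ |x| / 2`. By
oddness it suffices to take `x ≥ 0`, where this is `sin t ≥ -t / 4` for `t = 2x ≥ 0`: `sin` is
nonnegative on `[0, π]`, on `[π, 4]` it is at least `π - t`, and beyond `4` the bound `-1` is enough.
Non-convexity is seen at the midpoint `π / 2` of `0` and `π`, because `π² < 12`.
-/

open Real

lemma neg_div_four_le_sin {t : ℝ} (ht : 0 ≤ t) : -(t / 4) ≤ sin t := by
  rcases le_or_gt t π with htπ | htπ
  · linarith [sin_nonneg_of_nonneg_of_le_pi ht htπ]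
  rcases le_or_gt t 4 with ht4 | ht4
  · have h : sin (t - π) ≤ t - π := sin_le (by linarith)
    rw [sin_sub_pi] at h
    linarith [pi_gt_three]
  · linarith [neg_one_le_sin t]

lemma half_le_two_mul_add_three_mul_sin_two_mul {x : ℝ} (hx : 0 ≤ x) :
    x / 2 ≤ 2 * x + 3 * sin (2 * x) := by
  linarith [neg_div_four_le_sin (by linarith : 0 ≤ 2 * x)]

lemma sq_div_four_le_two_mul_add_three_mul_sin_two_mul_sq (x : ℝ) :
    x ^ 2 / 4 ≤ (2 * x + 3 * sin (2 * x)) ^ 2 := by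
  wlog hx : 0 ≤ x
  · have h := this (-x) (by linarith)
    rw [mul_neg, sin_neg, neg_sq] at h
    convert h using 1
    ring
  have h := half_le_two_mul_add_three_mul_sin_two_mul hx
  calc x ^ 2 / 4 = (x / 2) ^ 2 := by ring
    _ ≤ (2 * x + 3 * sin (2 * x)) ^ 2 := pow_le_pow_left₀ (by linarith) h 2

lemma hasDerivAt_sq_add_mul_sin_sq (c x : ℝ) :
    HasDerivAt (fun x => x ^ 2 + c * sin x ^ 2) (2 * x + c * sin (2 * x)) x := by
  have h := (hasDerivAt_pow 2 x).fun_add (((hasDerivAt_sin x).fun_pow 2).const_mul c)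
  refine h.congr_deriv ?_
  rw [sin_two_mul]
  push_cast
  ring

lemma not_convexOn_sq_add_mul_sin_sq {c : ℝ} (hc : π ^ 2 / 4 < c) :
    ¬ ConvexOn ℝ Set.univ (fun x => x ^ 2 + c * sin x ^ 2) := by
  intro h
  have hmid := h.2 (Set.mem_univ 0) (Set.mem_univ π) (by norm_num : (0 : ℝ) ≤ 1 / 2)
    (by norm_num : (0 : ℝ) ≤ 1 / 2) (by norm_num)
  simp only [smul_eq_mul, mul_zero, zero_add, sin_zero, sin_pi] at hmid
  rw [show 1 / 2 * π = π / 2 by ring, sin_pi_div_two] at hmid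
  linarith

theorem stmt_18 (f : ℝ → ℝ) (hf : f = fun x => x ^ 2 + 3 * Real.sin x ^ 2) :
    (∀ x, 0 ≤ f x) ∧ f 0 = 0 ∧
    (∀ x, HasDerivAt f (2 * x + 3 * Real.sin (2 * x)) x) ∧
    (∀ x, (2 * x + 3 * Real.sin (2 * x)) ^ 2 ≥ (1 / 16) * (x ^ 2 + 3 * Real.sin x ^ 2)) ∧
    ¬ ConvexOn ℝ Set.univ f := by
  subst hf
  refine ⟨fun x => by positivity, by simp, hasDerivAt_sq_add_mul_sin_sq 3, fun x => ?_,
    not_convexOn_sq_add_mul_sin_sq ?_⟩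
  · linarith [sin_sq_le_sq (x := x), sq_div_four_le_two_mul_add_three_mul_sin_two_mul_sq x]
  · nlinarith [pi_pos, pi_lt_d2]
end
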